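/- arXiv:1610.05170 — 4 statements merged into one kernel-verified Lean document; each statement's English description precedes it below -/
import Mathlib

section
/- Let I ⊆ ℝ be an open interval, let f : ℝ → ℝ be twice differentiable on I with f(t) > 0 for all t ∈ I, and suppose B := 2f′/f satisfies: B(t)² + 2B′(t) is equal to the same constant c for all t ∈ I. Then the function t ↦ f(t)²·B′(t) is constant on I. -/
/-! Since `B = 2f'/f`, the hypothesis says `B' = (c - B²)/2` on `I`, and the function
`f² (c - B²)` has derivative `2ff'(c - B²) - 2f²BB' = 4ff'B' - 2f(fB)B' = 0`.
Hence it is constant on the interval `I`, and it equals `2 f² B'` there. -/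

theorem Convex.eq_of_hasDerivAt_zero {E : Type*} [NormedAddCommGroup E] [NormedSpace ℝ E]
    {s : Set ℝ} {g : ℝ → E} (hs : Convex ℝ s) (hg : ∀ x ∈ s, HasDerivAt g 0 x)
    {x y : ℝ} (hx : x ∈ s) (hy : y ∈ s) : g x = g y := by
  have h := hs.norm_image_sub_le_of_norm_hasDerivWithin_le (C := 0)
    (fun z hz => (hg z hz).hasDerivWithinAt) (fun _ _ => norm_zero.le) hx hy
  rw [zero_mul, norm_le_zero_iff, sub_eq_zero] at h
  exact h.symm

theorem hasDerivAt_sq_mul_sub_sq_eq_zero {f B : ℝ → ℝ} {f' B' c t : ℝ}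
    (hf : HasDerivAt f f' t) (hB : HasDerivAt B B' t) (hfB : f t * B t = 2 * f')
    (hc : B t ^ 2 + 2 * B' = c) :
    HasDerivAt (fun s => f s ^ 2 * (c - B s ^ 2)) 0 t := by
  subst hc
  refine ((hf.pow 2).mul ((hasDerivAt_const t _).sub (hB.pow 2))).congr_deriv ?_
  simp only [Pi.pow_apply, Pi.sub_apply]
  linear_combination (-2 * f t * B') * hfB

theorem stmt_2_general (I : Set ℝ) (hIconn : I.OrdConnected)
    (f : ℝ → ℝ)
    (hf : ∀ t ∈ I, DifferentiableAt ℝ f t)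
    (hf' : ∀ t ∈ I, DifferentiableAt ℝ (deriv f) t)
    (hfpos : ∀ t ∈ I, 0 < f t)
    (B : ℝ → ℝ) (hB : B = fun t => 2 * deriv f t / f t)
    (c : ℝ) (hc : ∀ t ∈ I, (B t) ^ 2 + 2 * deriv B t = c) :
    ∀ s ∈ I, ∀ t ∈ I, f s ^ 2 * deriv B s = f t ^ 2 * deriv B t := by
  have hB_diff : ∀ t ∈ I, DifferentiableAt ℝ B t := fun t ht =>
    hB ▸ ((hf' t ht).const_mul 2).div (hf t ht) (hfpos t ht).ne'
  have hderiv_zero : ∀ t ∈ I, HasDerivAt (fun s => f s ^ 2 * (c - B s ^ 2)) 0 t :=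
    fun t ht => hasDerivAt_sq_mul_sub_sq_eq_zero (hf t ht).hasDerivAt (hB_diff t ht).hasDerivAt
      (by rw [hB]; field_simp [(hfpos t ht).ne']) (hc t ht)
  have hval : ∀ t ∈ I, f t ^ 2 * deriv B t = f t ^ 2 * (c - B t ^ 2) / 2 := by
    intro t ht
    rw [← hc t ht]
    ring
  intro s hs t ht
  rw [hval s hs, hval t ht, hIconn.convex.eq_of_hasDerivAt_zero hderiv_zero hs ht]

/-- If `f` is twice differentiable and positive on an open interval `I`,
and `B := 2 f'/f` satisfies `B² + 2 B' ≡ c` on `I` for a constant `c`, then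
`t ↦ f t ² · B' t` is constant on `I`. -/
theorem stmt_2 (I : Set ℝ) (hIopen : IsOpen I) (hIconn : I.OrdConnected)
    (f : ℝ → ℝ)
    (hf : ∀ t ∈ I, DifferentiableAt ℝ f t)
    (hf' : ∀ t ∈ I, DifferentiableAt ℝ (deriv f) t)
    (hfpos : ∀ t ∈ I, 0 < f t)
    (B : ℝ → ℝ) (hB : B = fun t => 2 * deriv f t / f t)
    (c : ℝ) (hc : ∀ t ∈ I, (B t) ^ 2 + 2 * deriv B t = c) :
    ∀ s ∈ I, ∀ t ∈ I, f s ^ 2 * deriv B s = f t ^ 2 * deriv B t :=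
  stmt_2_general I hIconn f hf hf' hfpos B hB c hc
end

section
/- Let n ≥ 2 be an integer, I ⊆ ℝ an open interval, and f : ℝ → ℝ twice differentiable on I with f(t) > 0 for all t ∈ I. Set B := 2f′/f and suppose there is a constant \bar Λ ∈ ℝ with −(1/8)·n·(n−1)·(B(t)² + 2B′(t)) = \bar Λ for all t ∈ I. Then exactly one of the following holds: (1) \bar Λ < 0, and setting L := √(n(n−1)/(−2\bar Λ)), there exist L′ ∈ {L, −L}, C > 0, and b ∈ ℝ such that on I either f(t) = C·e^{t/L′}, or f(t) = C·cosh((b+t)/L′), or f(t) = C·sinh((b+t)/L′) with (b+t)/L′ > 0 on I; (2) \bar Λ > 0, and setting L := √(n(n−1)/(2\bar Λ)), there exist C > 0 and b ∈ ℝ such that f(t) = C·cos((b+t)/L) for all t ∈ I; (3) \bar Λ = 0, and there exist a, c ∈ ℝ such that f(t) = a·t + c for all t ∈ I. -/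
/-!
Since `B² + 2B' = 4f''/f`, the hypothesis is the linear equation `f'' = k f` with
`k = -2Λ/(n(n-1))`. On an interval, every solution of `y'' = q y` is a combination of any two
solutions `u, v` with nonvanishing Wronskian, with coefficients `W(f, v)/W(u, v)` and
`-W(f, u)/W(u, v)`, all Wronskians being constant. Taking the bases `{1, t}`,
`{cos (t/L), sin (t/L)}` and `{exp (t/L), exp (-t/L)}` according to the sign of `k`, positivity of
`f` leaves only the listed amplitude–phase forms.
-/

open Real

theorem Set.OrdConnected.eq_of_hasDerivAt_eq_zero {I : Set ℝ} (hI : I.OrdConnected) {g : ℝ → ℝ}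
    (hg : ∀ t ∈ I, HasDerivAt g 0 t) {x y : ℝ} (hx : x ∈ I) (hy : y ∈ I) : g y = g x := by
  have := hI.convex.norm_image_sub_le_of_norm_hasDerivWithin_le
    (fun t ht => (hg t ht).hasDerivWithinAt) (fun _ _ => norm_zero.le) hx hy
  simpa [sub_eq_zero] using this

def SolvesOn (q : ℝ → ℝ) (I : Set ℝ) (f f' : ℝ → ℝ) : Prop :=
  ∀ t ∈ I, HasDerivAt f (f' t) t ∧ HasDerivAt f' (q t * f t) t

namespace SolvesOn

variable {q : ℝ → ℝ} {I : Set ℝ} {f f' g g' : ℝ → ℝ}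

theorem wronskian_eq (hI : I.OrdConnected) (hf : SolvesOn q I f f') (hg : SolvesOn q I g g')
    {x y : ℝ} (hx : x ∈ I) (hy : y ∈ I) :
    f y * g' y - f' y * g y = f x * g' x - f' x * g x := by
  refine hI.eq_of_hasDerivAt_eq_zero (g := fun t => f t * g' t - f' t * g t) (fun t ht => ?_) hx hy
  obtain ⟨hf₁, hf₂⟩ := hf t ht
  obtain ⟨hg₁, hg₂⟩ := hg t ht
  exact ((hf₁.mul hg₂).sub (hf₂.mul hg₁)).congr_deriv (by ring)

theorem exists_eq_add (hI : I.OrdConnected) (hf : SolvesOn q I f f')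
    {u u' v v' : ℝ → ℝ} (hu : SolvesOn q I u u') (hv : SolvesOn q I v v')
    (hW : ∀ t ∈ I, u t * v' t - u' t * v t ≠ 0) :
    ∃ a b : ℝ, ∀ t ∈ I, f t = a * u t + b * v t := by
  rcases I.eq_empty_or_nonempty with rfl | ⟨t₀, ht₀⟩
  · exact ⟨0, 0, by simp⟩
  refine ⟨(f t₀ * v' t₀ - f' t₀ * v t₀) / (u t₀ * v' t₀ - u' t₀ * v t₀),
    -(f t₀ * u' t₀ - f' t₀ * u t₀) / (u t₀ * v' t₀ - u' t₀ * v t₀), fun t ht => ?_⟩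
  rw [← hf.wronskian_eq hI hv ht₀ ht, ← hf.wronskian_eq hI hu ht₀ ht,
    ← hu.wronskian_eq hI hv ht₀ ht, div_mul_eq_mul_div, div_mul_eq_mul_div, ← add_div,
    eq_div_iff (hW t ht)]
  ring

end SolvesOn

theorem sq_add_two_mul_deriv_eq {f : ℝ → ℝ} {t : ℝ} (hf : DifferentiableAt ℝ f t)
    (hf' : DifferentiableAt ℝ (deriv f) t) (h0 : f t ≠ 0) :
    (2 * deriv f t / f t) ^ 2 + 2 * deriv (fun s => 2 * deriv f s / f s) t
      = 4 * deriv (deriv f) t / f t := by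
  have hB : HasDerivAt (fun s => 2 * deriv f s / f s)
      ((2 * deriv (deriv f) t * f t - 2 * deriv f t * deriv f t) / f t ^ 2) t :=
    (hf'.hasDerivAt.const_mul 2).div hf.hasDerivAt h0
  rw [hB.deriv]
  field_simp
  ring

theorem solvesOn_of_deriv_deriv_eq {I : Set ℝ} {f : ℝ → ℝ} {k : ℝ}
    (hf : ∀ t ∈ I, DifferentiableAt ℝ f t) (hf' : ∀ t ∈ I, DifferentiableAt ℝ (deriv f) t)
    (hode : ∀ t ∈ I, deriv (deriv f) t = k * f t) :
    SolvesOn (fun _ => k) I f (deriv f) := fun t ht =>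
  ⟨(hf t ht).hasDerivAt, hode t ht ▸ (hf' t ht).hasDerivAt⟩

section ParticularSolutions

variable (I : Set ℝ) (L : ℝ)

theorem solvesOn_const_one : SolvesOn (fun _ => 0) I (fun _ => 1) (fun _ => 0) := fun t _ =>
  ⟨hasDerivAt_const t 1, by simpa using hasDerivAt_const t (0 : ℝ)⟩

theorem solvesOn_id : SolvesOn (fun _ => 0) I id (fun _ => 1) := fun t _ =>
  ⟨hasDerivAt_id t, by simpa using hasDerivAt_const t (1 : ℝ)⟩

theorem solvesOn_cos_div :
    SolvesOn (fun _ => -(1 / L ^ 2)) I (fun t => cos (t / L)) (fun t => -sin (t / L) / L) :=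
  fun t _ =>
    have h := (hasDerivAt_id t).div_const L
    ⟨h.cos.congr_deriv (by simp only [id]; ring),
      (h.sin.neg.div_const L).congr_deriv (by simp only [id]; ring)⟩

theorem solvesOn_sin_div :
    SolvesOn (fun _ => -(1 / L ^ 2)) I (fun t => sin (t / L)) (fun t => cos (t / L) / L) :=
  fun t _ =>
    have h := (hasDerivAt_id t).div_const L
    ⟨h.sin.congr_deriv (by simp only [id]; ring),
      (h.cos.div_const L).congr_deriv (by simp only [id]; ring)⟩

theorem solvesOn_exp_div :
    SolvesOn (fun _ => 1 / L ^ 2) I (fun t => exp (t / L)) (fun t => exp (t / L) / L) :=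
  fun t _ =>
    have h := (hasDerivAt_id t).div_const L
    ⟨h.exp.congr_deriv (by simp only [id]; ring),
      (h.exp.div_const L).congr_deriv (by simp only [id]; ring)⟩

theorem solvesOn_exp_neg_div :
    SolvesOn (fun _ => 1 / L ^ 2) I (fun t => exp (-(t / L))) (fun t => -exp (-(t / L)) / L) :=
  fun t _ =>
    have h := ((hasDerivAt_id t).div_const L).fun_neg
    ⟨h.exp.congr_deriv (by simp only [id]; ring),
      (h.exp.neg.div_const L).congr_deriv (by simp only [id]; ring)⟩

end ParticularSolutions

theorem exists_pos_mul_cos_add_eq {a b : ℝ} (h : a ≠ 0 ∨ b ≠ 0) :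
    ∃ C : ℝ, 0 < C ∧ ∃ φ : ℝ, ∀ x, a * cos x + b * sin x = C * cos (φ + x) := by
  set z : ℂ := ⟨a, -b⟩
  have hz : z ≠ 0 := by
    contrapose! h
    simpa [z, Complex.ext_iff] using h
  have hC : 0 < ‖z‖ := norm_pos_iff.2 hz
  refine ⟨‖z‖, hC, z.arg, fun x => ?_⟩
  rw [cos_add, Complex.cos_arg hz, Complex.sin_arg]
  field_simp
  simp only [z]
  ring

theorem exists_pos_mul_exp_eq_and_mul_exp_neg_eq {a c : ℝ} (ha : 0 < a) (hc : 0 < c) :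
    ∃ C : ℝ, 0 < C ∧ ∃ φ : ℝ, C * exp φ = a ∧ C * exp (-φ) = c := by
  have hac : 0 < a * c := mul_pos ha hc
  have hC : 0 < √(a * c) := sqrt_pos.2 hac
  refine ⟨√(a * c), hC, log (a / √(a * c)), ?_, ?_⟩
  · rw [exp_log (div_pos ha hC)]
    field_simp
  · rw [exp_neg, exp_log (div_pos ha hC), inv_div, ← mul_div_assoc, ← sq, sq_sqrt hac.le]
    field_simp

theorem exists_pos_mul_cosh_add_eq {a c : ℝ} (ha : 0 < a) (hc : 0 < c) :
    ∃ C : ℝ, 0 < C ∧ ∃ φ : ℝ, ∀ x, a * exp x + c * exp (-x) = C * cosh (φ + x) := by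
  obtain ⟨C, hC, φ, rfl, rfl⟩ := exists_pos_mul_exp_eq_and_mul_exp_neg_eq ha hc
  refine ⟨2 * C, by positivity, φ, fun x => ?_⟩
  rw [cosh_eq, exp_add, neg_add, exp_add]
  ring

theorem exists_pos_mul_sinh_add_eq {a c : ℝ} (ha : 0 < a) (hc : 0 < c) :
    ∃ C : ℝ, 0 < C ∧ ∃ φ : ℝ, ∀ x, a * exp x - c * exp (-x) = C * sinh (φ + x) := by
  obtain ⟨C, hC, φ, rfl, rfl⟩ := exists_pos_mul_exp_eq_and_mul_exp_neg_eq ha hc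
  refine ⟨2 * C, by positivity, φ, fun x => ?_⟩
  rw [sinh_eq, exp_add, neg_add, exp_add]
  ring

theorem exists_eq_mul_exp_or_cosh_or_sinh {I : Set ℝ} {f : ℝ → ℝ} {L a c : ℝ} (hL : L ≠ 0)
    (ha : 0 < a) (hf : ∀ t ∈ I, f t = a * exp (t / L) + c * exp (-(t / L)))
    (hfpos : ∀ t ∈ I, 0 < f t) :
    ∃ C : ℝ, 0 < C ∧ ∃ b : ℝ,
      ((∀ t ∈ I, f t = C * exp (t / L)) ∨
       (∀ t ∈ I, f t = C * cosh ((b + t) / L)) ∨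
       (∀ t ∈ I, f t = C * sinh ((b + t) / L) ∧ 0 < (b + t) / L)) := by
  have hshift (φ t : ℝ) : (φ * L + t) / L = φ + t / L := by
    rw [add_div, mul_div_cancel_right₀ _ hL]
  rcases lt_trichotomy c 0 with hc | rfl | hc
  · obtain ⟨C, hC, φ, hφ⟩ := exists_pos_mul_sinh_add_eq ha (neg_pos.2 hc)
    have hfC : ∀ t ∈ I, f t = C * sinh ((φ * L + t) / L) := fun t ht => by
      rw [hf t ht, hshift, ← hφ]
      ring
    refine ⟨C, hC, φ * L, Or.inr (Or.inr fun t ht => ⟨hfC t ht, ?_⟩)⟩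
    exact sinh_pos_iff.1 (pos_of_mul_pos_right (hfC t ht ▸ hfpos t ht) hC.le)
  · exact ⟨a, ha, 0, Or.inl fun t ht => by simpa using hf t ht⟩
  · obtain ⟨C, hC, φ, hφ⟩ := exists_pos_mul_cosh_add_eq ha hc
    exact ⟨C, hC, φ * L, Or.inr (Or.inl fun t ht => by rw [hf t ht, hshift, hφ])⟩

namespace SolvesOn

variable {I : Set ℝ} {f f' : ℝ → ℝ}

theorem exists_eq_mul_add (hI : I.OrdConnected) (hf : SolvesOn (fun _ => 0) I f f') :
    ∃ a c : ℝ, ∀ t ∈ I, f t = a * t + c := by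
  obtain ⟨c, a, h⟩ :=
    hf.exists_eq_add hI (solvesOn_const_one I) (solvesOn_id I) (fun _ _ => by simp)
  exact ⟨a, c, fun t ht => by rw [h t ht, id, mul_one, add_comm]⟩

theorem exists_eq_mul_cos (hI : I.OrdConnected) {L : ℝ} (hL : L ≠ 0)
    (hf : SolvesOn (fun _ => -(1 / L ^ 2)) I f f') (hfpos : ∀ t ∈ I, 0 < f t) :
    ∃ C : ℝ, 0 < C ∧ ∃ b : ℝ, ∀ t ∈ I, f t = C * cos ((b + t) / L) := by
  obtain ⟨a, b, hab⟩ := hf.exists_eq_add hI (solvesOn_cos_div I L) (solvesOn_sin_div I L)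
    fun t _ => by
      have hW : cos (t / L) * (cos (t / L) / L) - -sin (t / L) / L * sin (t / L) = 1 / L := by
        rw [← sin_sq_add_cos_sq (t / L)]
        ring
      exact hW.trans_ne (one_div_ne_zero hL)
  rcases I.eq_empty_or_nonempty with rfl | ⟨t₀, ht₀⟩
  · exact ⟨1, one_pos, 0, by simp⟩
  have hne : a ≠ 0 ∨ b ≠ 0 := by
    by_contra! h
    have := hfpos t₀ ht₀
    simp [hab t₀ ht₀, h.1, h.2] at this
  obtain ⟨C, hC, φ, hφ⟩ := exists_pos_mul_cos_add_eq hne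
  refine ⟨C, hC, φ * L, fun t ht => ?_⟩
  rw [hab t ht, hφ, add_div, mul_div_cancel_right₀ _ hL]

theorem exists_eq_mul_exp_or_cosh_or_sinh (hI : I.OrdConnected) {L : ℝ} (hL : L ≠ 0)
    (hf : SolvesOn (fun _ => 1 / L ^ 2) I f f') (hfpos : ∀ t ∈ I, 0 < f t) :
    ∃ L' ∈ ({L, -L} : Set ℝ), ∃ C : ℝ, 0 < C ∧ ∃ b : ℝ,
      ((∀ t ∈ I, f t = C * exp (t / L')) ∨
       (∀ t ∈ I, f t = C * cosh ((b + t) / L')) ∨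
       (∀ t ∈ I, f t = C * sinh ((b + t) / L') ∧ 0 < (b + t) / L')) := by
  obtain ⟨a, c, hac⟩ := hf.exists_eq_add hI (solvesOn_exp_div I L) (solvesOn_exp_neg_div I L)
    fun t _ => by
      have hW : exp (t / L) * (-exp (-(t / L)) / L) - exp (t / L) / L * exp (-(t / L))
          = -2 / L := by
        rw [← mul_one (-2 : ℝ), ← exp_zero, ← add_neg_cancel (t / L), exp_add]
        ring
      exact hW.trans_ne (div_ne_zero (by norm_num) hL)
  rcases lt_or_ge 0 a with ha | ha
  · exact ⟨L, .inl rfl, _root_.exists_eq_mul_exp_or_cosh_or_sinh hL ha hac hfpos⟩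
  rcases lt_or_ge 0 c with hc | hc
  · refine ⟨-L, .inr rfl,
      _root_.exists_eq_mul_exp_or_cosh_or_sinh (c := a) (neg_ne_zero.2 hL) hc (fun t ht => ?_)
        hfpos⟩
    rw [hac t ht, div_neg, neg_neg]
    ring
  have hI : I = ∅ := Set.eq_empty_of_forall_notMem fun t ht => by
    have := hfpos t ht
    rw [hac t ht] at this
    nlinarith [exp_pos (t / L), exp_pos (-(t / L))]
  subst hI
  exact ⟨L, .inl rfl, 1, one_pos, 0, Or.inl (by simp)⟩

end SolvesOn

theorem one_div_sqrt_div_sq {x y : ℝ} (h : 0 ≤ x / y) : 1 / √(x / y) ^ 2 = y / x := by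
  rw [sq_sqrt h, one_div_div]

theorem stmt_7_general (n : ℕ) (hn : 2 ≤ n)
    (I : Set ℝ) (hIconn : I.OrdConnected)
    (f : ℝ → ℝ)
    (hf : ∀ t ∈ I, DifferentiableAt ℝ f t)
    (hf' : ∀ t ∈ I, DifferentiableAt ℝ (deriv f) t)
    (hfpos : ∀ t ∈ I, 0 < f t)
    (B : ℝ → ℝ) (hB : B = fun t => 2 * deriv f t / f t)
    (Λ : ℝ)
    (hΛ : ∀ t ∈ I, -(1/8) * (n : ℝ) * ((n : ℝ) - 1) * ((B t) ^ 2 + 2 * deriv B t) = Λ) :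
    ((Λ < 0 ∧
        ∃ L' ∈ ({Real.sqrt ((n : ℝ) * ((n : ℝ) - 1) / (-2 * Λ)),
                 -Real.sqrt ((n : ℝ) * ((n : ℝ) - 1) / (-2 * Λ))} : Set ℝ),
          ∃ C : ℝ, 0 < C ∧ ∃ b : ℝ,
            ((∀ t ∈ I, f t = C * Real.exp (t / L')) ∨
             (∀ t ∈ I, f t = C * Real.cosh ((b + t) / L')) ∨
             (∀ t ∈ I, f t = C * Real.sinh ((b + t) / L') ∧ 0 < (b + t) / L'))) ∧
      ¬(0 < Λ) ∧ ¬(Λ = 0)) ∨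
    ((0 < Λ ∧
        ∃ C : ℝ, 0 < C ∧ ∃ b : ℝ, ∀ t ∈ I,
          f t = C * Real.cos ((b + t) / Real.sqrt ((n : ℝ) * ((n : ℝ) - 1) / (2 * Λ)))) ∧
      ¬(Λ < 0) ∧ ¬(Λ = 0)) ∨
    ((Λ = 0 ∧ ∃ a c : ℝ, ∀ t ∈ I, f t = a * t + c) ∧
      ¬(Λ < 0) ∧ ¬(0 < Λ)) := by
  subst hB
  have hN : (0 : ℝ) < n * (n - 1) := by
    have : (2 : ℝ) ≤ n := by exact_mod_cast hn
    nlinarith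
  have hsol : SolvesOn (fun _ => -2 * Λ / (n * (n - 1))) I f (deriv f) := by
    refine solvesOn_of_deriv_deriv_eq hf hf' fun t ht => ?_
    have h := hΛ t ht
    rw [sq_add_two_mul_deriv_eq (hf t ht) (hf' t ht) (hfpos t ht).ne'] at h
    field_simp [(hfpos t ht).ne'] at h
    rw [div_mul_eq_mul_div, eq_div_iff hN.ne']
    linear_combination (-1 / 4) * h
  rcases lt_trichotomy Λ 0 with hΛ0 | rfl | hΛ0
  · have hpos : 0 < n * (n - 1) / (-2 * Λ) := div_pos hN (by linarith)
    rw [← one_div_sqrt_div_sq hpos.le] at hsol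
    exact Or.inl ⟨⟨hΛ0, hsol.exists_eq_mul_exp_or_cosh_or_sinh hIconn (sqrt_pos.2 hpos).ne' hfpos⟩,
      hΛ0.not_gt, hΛ0.ne⟩
  · simp only [mul_zero, zero_div] at hsol
    exact Or.inr (Or.inr ⟨⟨rfl, hsol.exists_eq_mul_add hIconn⟩, lt_irrefl 0, lt_irrefl 0⟩)
  · have hpos : 0 < n * (n - 1) / (2 * Λ) := div_pos hN (by linarith)
    rw [show -2 * Λ / (n * (n - 1)) = -(1 / √(n * (n - 1) / (2 * Λ)) ^ 2) by
      rw [one_div_sqrt_div_sq hpos.le]; ring] at hsol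
    exact Or.inr (Or.inl ⟨⟨hΛ0, hsol.exists_eq_mul_cos hIconn (sqrt_pos.2 hpos).ne' hfpos⟩,
      hΛ0.not_gt, hΛ0.ne'⟩)

/-- Classification of positive warping functions `f` on an open interval
`I` for which `−(1/8)·n·(n−1)·(B² + 2B')` is a constant `Λ̄`, where `B := 2f'/f`.
Exactly one of three cases holds, according to the sign of `Λ̄`. -/
theorem stmt_7 (n : ℕ) (hn : 2 ≤ n)
    (I : Set ℝ) (hIopen : IsOpen I) (hIconn : I.OrdConnected)
    (f : ℝ → ℝ)
    (hf : ∀ t ∈ I, DifferentiableAt ℝ f t)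
    (hf' : ∀ t ∈ I, DifferentiableAt ℝ (deriv f) t)
    (hfpos : ∀ t ∈ I, 0 < f t)
    (B : ℝ → ℝ) (hB : B = fun t => 2 * deriv f t / f t)
    (Λ : ℝ)
    (hΛ : ∀ t ∈ I, -(1/8) * (n : ℝ) * ((n : ℝ) - 1) * ((B t) ^ 2 + 2 * deriv B t) = Λ) :
    ((Λ < 0 ∧
        ∃ L' ∈ ({Real.sqrt ((n : ℝ) * ((n : ℝ) - 1) / (-2 * Λ)),
                 -Real.sqrt ((n : ℝ) * ((n : ℝ) - 1) / (-2 * Λ))} : Set ℝ),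
          ∃ C : ℝ, 0 < C ∧ ∃ b : ℝ,
            ((∀ t ∈ I, f t = C * Real.exp (t / L')) ∨
             (∀ t ∈ I, f t = C * Real.cosh ((b + t) / L')) ∨
             (∀ t ∈ I, f t = C * Real.sinh ((b + t) / L') ∧ 0 < (b + t) / L'))) ∧
      ¬(0 < Λ) ∧ ¬(Λ = 0)) ∨
    ((0 < Λ ∧
        ∃ C : ℝ, 0 < C ∧ ∃ b : ℝ, ∀ t ∈ I,
          f t = C * Real.cos ((b + t) / Real.sqrt ((n : ℝ) * ((n : ℝ) - 1) / (2 * Λ)))) ∧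
      ¬(Λ < 0) ∧ ¬(Λ = 0)) ∨
    ((Λ = 0 ∧ ∃ a c : ℝ, ∀ t ∈ I, f t = a * t + c) ∧
      ¬(Λ < 0) ∧ ¬(0 < Λ)) :=
  stmt_7_general n hn I hIconn f hf hf' hfpos B hB Λ hΛ
end

section
/- Let L > 0, let I ⊆ ℝ be an open interval, and let B : ℝ → ℝ be differentiable on I with B(t)² + 2B′(t) = −4/L² for all t ∈ I. Then there exists b ∈ ℝ such that cos((t+b)/L) ≠ 0 and B(t) = −(2/L)·tan((t+b)/L) for all t ∈ I. -/
open Real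

/-! The substitution `B = -(2/L) tan θ` linearizes the Riccati equation: the angle
`θ = arctan (-(L/2) B)` satisfies `L θ' = 1` wherever `B² + 2B' = -4/L²`, so on an interval
`L θ(t) = t + b` for a constant `b`. Since `θ` takes values in `(-π/2, π/2)`, `cos θ ≠ 0` and
inverting the arctangent gives the tangent profile. -/

theorem Convex.eq_of_forall_hasDerivAt_zero {f : ℝ → ℝ} {s : Set ℝ} (hs : Convex ℝ s)
    (hf : ∀ x ∈ s, HasDerivAt f 0 x) {x y : ℝ} (hx : x ∈ s) (hy : y ∈ s) : f x = f y := by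
  have h := hs.norm_image_sub_le_of_norm_hasDerivWithin_le (f' := fun _ => 0) (C := 0)
    (fun z hz => (hf z hz).hasDerivWithinAt) (fun _ _ => by simp) hy hx
  rw [zero_mul, norm_le_zero_iff, sub_eq_zero] at h
  exact h

theorem hasDerivAt_mul_arctan_of_riccati {L : ℝ} (hL : L ≠ 0) {B : ℝ → ℝ} {t : ℝ}
    (hB : DifferentiableAt ℝ B t) (hric : B t ^ 2 + 2 * deriv B t = -4 / L ^ 2) :
    HasDerivAt (fun s => L * arctan (-(L / 2) * B s)) 1 t := by
  refine (((hasDerivAt_arctan _).comp t (hB.hasDerivAt.const_mul (-(L / 2)))).const_mul L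
    ).congr_deriv ?_
  have hden : 1 + (-(L / 2) * B t) ^ 2 ≠ 0 := by positivity
  have hB' : deriv B t = (-4 / L ^ 2 - B t ^ 2) / 2 := by linarith
  rw [hB']
  field_simp
  ring

theorem cos_ne_zero_and_eq_mul_tan_of_arctan_eq {L x θ : ℝ} (hL : L ≠ 0)
    (h : arctan (-(L / 2) * x) = θ) : cos θ ≠ 0 ∧ x = -(2 / L) * tan θ := by
  subst h
  refine ⟨(cos_arctan_pos _).ne', ?_⟩
  rw [tan_arctan]
  field_simp

theorem stmt_9_general (L : ℝ) (hL : 0 < L)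
    (I : Set ℝ) (hIconn : I.OrdConnected)
    (B : ℝ → ℝ)
    (hB : ∀ t ∈ I, DifferentiableAt ℝ B t)
    (hric : ∀ t ∈ I, (B t) ^ 2 + 2 * deriv B t = -4 / L ^ 2) :
    ∃ b : ℝ, ∀ t ∈ I, Real.cos ((t + b) / L) ≠ 0 ∧
      B t = -(2 / L) * Real.tan ((t + b) / L) := by
  rcases I.eq_empty_or_nonempty with rfl | ⟨t₀, ht₀⟩
  · exact ⟨0, by simp⟩
  set phase : ℝ → ℝ := fun s => L * arctan (-(L / 2) * B s)
  have hphase_sub_id : ∀ t ∈ I, phase t - t = phase t₀ - t₀ := fun t ht =>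
    hIconn.convex.eq_of_forall_hasDerivAt_zero (f := fun s => phase s - s)
      (fun s hs => ((hasDerivAt_mul_arctan_of_riccati hL.ne' (hB s hs) (hric s hs)).sub
        (hasDerivAt_id s)).congr_deriv (sub_self 1))
      ht ht₀
  refine ⟨phase t₀ - t₀, fun t ht => cos_ne_zero_and_eq_mul_tan_of_arctan_eq hL.ne' ?_⟩
  rw [eq_div_iff hL.ne', ← hphase_sub_id t ht]
  simp only [phase]
  ring

/-- Solutions of the Riccati equation `B² + 2B' = −4/L²` (with `L > 0`)
on an open interval are exactly the tangent profiles `B t = −(2/L)·tan((t+b)/L)`. -/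
theorem stmt_9 (L : ℝ) (hL : 0 < L)
    (I : Set ℝ) (hIopen : IsOpen I) (hIconn : I.OrdConnected)
    (B : ℝ → ℝ)
    (hB : ∀ t ∈ I, DifferentiableAt ℝ B t)
    (hric : ∀ t ∈ I, (B t) ^ 2 + 2 * deriv B t = -4 / L ^ 2) :
    ∃ b : ℝ, ∀ t ∈ I, Real.cos ((t + b) / L) ≠ 0 ∧
      B t = -(2 / L) * Real.tan ((t + b) / L) :=
  stmt_9_general L hL I hIconn B hB hric
end

section
/- Let n ≥ 2 be an integer, k > 0, L ≠ 0, b ∈ ℝ, and define f(t) = k^{−1/2}·sinh((b+t)/L) for t ≠ −b. With B := 2f′/f, for every t ≠ −b one has: −(1/8)·n·(n−1)·(B(t)² + 2B′(t)) = −n(n−1)/(2L²), and (1/4)·(n−1)·(n−2)·f(t)²·B′(t) = −(n−1)(n−2)/(2kL²). -/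
open Real

/-!
Writing `B = 2 f' / f`, the quotient rule gives `B² + 2 B' = 4 f'' / f` and
`f² B' = 2 (f f'' - f'²)` for any twice differentiable `f`. For `f = c · sinh ((b + t) / L)` one has
`f'' = f / L²` and `f f'' - f'² = -c² (cosh² - sinh²) / L² = -c² / L²`, and `c² = 1 / k`.
-/

section TwoLogDeriv

variable {f f' : ℝ → ℝ} {f'' t : ℝ}

theorem deriv_two_mul_deriv_div (hf : ∀ s, HasDerivAt f (f' s) s) (hf' : HasDerivAt f' f'' t)
    (ht : f t ≠ 0) :
    deriv (fun s => 2 * deriv f s / f s) t = 2 * (f'' * f t - f' t ^ 2) / f t ^ 2 := by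
  have hderiv : deriv f = f' := funext fun s => (hf s).deriv
  simp only [hderiv]
  exact ((hf'.const_mul 2).div (hf t) ht).deriv.trans (by ring)

theorem two_mul_deriv_div_sq_add_two_mul_deriv (hf : ∀ s, HasDerivAt f (f' s) s)
    (hf' : HasDerivAt f' f'' t) (ht : f t ≠ 0) :
    (2 * deriv f t / f t) ^ 2 + 2 * deriv (fun s => 2 * deriv f s / f s) t = 4 * f'' / f t := by
  rw [deriv_two_mul_deriv_div hf hf' ht, (hf t).deriv]
  field_simp
  ring

theorem sq_mul_deriv_two_mul_deriv_div (hf : ∀ s, HasDerivAt f (f' s) s)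
    (hf' : HasDerivAt f' f'' t) (ht : f t ≠ 0) :
    f t ^ 2 * deriv (fun s => 2 * deriv f s / f s) t = 2 * (f'' * f t - f' t ^ 2) := by
  rw [deriv_two_mul_deriv_div hf hf' ht]
  field_simp

end TwoLogDeriv

section ShiftedSinh

variable (c b L t : ℝ)

theorem hasDerivAt_const_mul_sinh_add_div :
    HasDerivAt (fun s => c * sinh ((b + s) / L)) (c * cosh ((b + t) / L) / L) t := by
  have h := (((hasDerivAt_id' t).const_add b).div_const L).sinh.const_mul c
  exact h.congr_deriv (by ring)

theorem hasDerivAt_const_mul_cosh_add_div_div :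
    HasDerivAt (fun s => c * cosh ((b + s) / L) / L) (c * sinh ((b + t) / L) / L ^ 2) t := by
  have h := ((((hasDerivAt_id' t).const_add b).div_const L).cosh.const_mul c).div_const L
  exact h.congr_deriv (by ring)

end ShiftedSinh

theorem rpow_neg_one_div_two_sq {k : ℝ} (hk : 0 ≤ k) : (k ^ (-(1 : ℝ) / 2)) ^ 2 = k⁻¹ := by
  rw [← rpow_natCast, ← rpow_mul hk]
  norm_num [rpow_neg_one]

theorem stmt_13_general (n : ℕ) (k L b : ℝ) (hk : 0 < k) (hL : L ≠ 0)
    (f : ℝ → ℝ) (hf : f = fun t => k ^ (-(1 : ℝ) / 2) * Real.sinh ((b + t) / L))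
    (B : ℝ → ℝ) (hB : B = fun t => 2 * deriv f t / f t) :
    ∀ t : ℝ, t ≠ -b →
      -(1/8) * (n : ℝ) * ((n : ℝ) - 1) * ((B t) ^ 2 + 2 * deriv B t) =
        -(n : ℝ) * ((n : ℝ) - 1) / (2 * L ^ 2) ∧
      (1/4) * ((n : ℝ) - 1) * ((n : ℝ) - 2) * (f t) ^ 2 * deriv B t =
        -((n : ℝ) - 1) * ((n : ℝ) - 2) / (2 * k * L ^ 2) := by
  intro t ht
  set c := k ^ (-(1 : ℝ) / 2)
  have hc : c ^ 2 = k⁻¹ := rpow_neg_one_div_two_sq hk.le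
  have hderiv : ∀ s, HasDerivAt f (c * cosh ((b + s) / L) / L) s := fun s =>
    hf ▸ hasDerivAt_const_mul_sinh_add_div c b L s
  have hderiv2 := hasDerivAt_const_mul_cosh_add_div_div c b L t
  have hsinh : sinh ((b + t) / L) ≠ 0 :=
    sinh_ne_zero.mpr (div_ne_zero (fun h => ht (by linarith)) hL)
  have hft : f t ≠ 0 := by
    rw [hf]
    exact mul_ne_zero (by positivity) hsinh
  have hf'' : c * sinh ((b + t) / L) / L ^ 2 = f t / L ^ 2 := by rw [hf]
  have hwronskian : c * sinh ((b + t) / L) / L ^ 2 * f t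
      - (c * cosh ((b + t) / L) / L) ^ 2 = -1 / (k * L ^ 2) := by
    rw [hf, div_mul_eq_div_div, div_eq_mul_inv (-1 : ℝ) k, ← hc]
    field_simp
    linear_combination (-c ^ 2) * cosh_sq_sub_sinh_sq ((b + t) / L)
  subst hB
  refine ⟨?_, ?_⟩
  · rw [two_mul_deriv_div_sq_add_two_mul_deriv hderiv hderiv2 hft, hf'']
    field_simp
    ring
  · rw [mul_assoc _ (f t ^ 2), sq_mul_deriv_two_mul_deriv_div hderiv hderiv2 hft, hwronskian]
    field_simp
    ring

/-- For the warping function `f t = k^(−1/2)·sinh((b+t)/L)`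
(`k > 0`, `L ≠ 0`, `t ≠ −b`) with `B := 2f'/f`, the ambient cosmological constant is
`−n(n−1)/(2L²)` and the induced one is `−(n−1)(n−2)/(2kL²)`. -/
theorem stmt_13 (n : ℕ) (hn : 2 ≤ n) (k L b : ℝ) (hk : 0 < k) (hL : L ≠ 0)
    (f : ℝ → ℝ) (hf : f = fun t => k ^ (-(1 : ℝ) / 2) * Real.sinh ((b + t) / L))
    (B : ℝ → ℝ) (hB : B = fun t => 2 * deriv f t / f t) :
    ∀ t : ℝ, t ≠ -b →
      -(1/8) * (n : ℝ) * ((n : ℝ) - 1) * ((B t) ^ 2 + 2 * deriv B t) =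
        -(n : ℝ) * ((n : ℝ) - 1) / (2 * L ^ 2) ∧
      (1/4) * ((n : ℝ) - 1) * ((n : ℝ) - 2) * (f t) ^ 2 * deriv B t =
        -((n : ℝ) - 1) * ((n : ℝ) - 2) / (2 * k * L ^ 2) :=
  stmt_13_general n k L b hk hL f hf B hB
end
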